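/- arXiv:2004.02846 — 2 statements merged into one kernel-verified Lean document; each statement's English description precedes it below -/
import Mathlib

section
/- Let p be an odd prime, k ≥ 1 and n = p^k. Let E be the free group on generators b_0, …, b_{n−1}, let M = E/(γ_3(E) E^p), let the cyclic group A = ℤ/p^k act on M by the automorphism induced by the cyclic shift b_i ↦ b_{i+1 (indices mod n)}, and let G_k = A ⋉ M; write x ∈ G_k for the element corresponding to the generator 1 ∈ A. Then for every i with 1 ≤ i ≤ 2p^k − 1, the i-th term of the lower p-series of G_k satisfies P_i(G_k) = ⟨x^{p^{i−1}}⟩ · γ_i(G_k), the subgroup generated by the element x^{p^{i−1}} together with γ_i(G_k). -/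
/-- The subgroup of a free group generated by all `p`-th powers. -/
def freePowSubgroup (p : ℕ) (α : Type) : Subgroup (FreeGroup α) :=
  Subgroup.closure (Set.range fun g : FreeGroup α => g ^ p)

instance freePowSubgroup_normal (p : ℕ) (α : Type) : (freePowSubgroup p α).Normal := by
  constructor
  intro n hn g
  induction hn using Subgroup.closure_induction with
  | mem x hx =>
    obtain ⟨h, rfl⟩ := hx
    refine Subgroup.subset_closure ⟨g * h * g⁻¹, ?_⟩
    simp only
    rw [conj_pow]
  | one => simpa using (freePowSubgroup p α).one_mem
  | mul x y _ _ hx hy =>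
    have := (freePowSubgroup p α).mul_mem hx hy
    convert this using 1
    group
  | inv x _ hx =>
    have := (freePowSubgroup p α).inv_mem hx
    convert this using 1
    group

/-- `γ_3(E) E^p` for the free group `E` on `α`. -/
def freeRelSubgroup (p : ℕ) (α : Type) : Subgroup (FreeGroup α) :=
  (⊤ : Subgroup (FreeGroup α)).lowerCentralSeries 2 ⊔ freePowSubgroup p α

instance freeRelSubgroup_normal (p : ℕ) (α : Type) : (freeRelSubgroup p α).Normal :=
  Subgroup.sup_normal _ _

/-- The free class-2-nilpotent exponent-`p` group on `α`, i.e. `E/(γ_3(E) E^p)`. -/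
def FreeClassTwoExpP (p : ℕ) (α : Type) : Type :=
  FreeGroup α ⧸ freeRelSubgroup p α

instance (p : ℕ) (α : Type) : Group (FreeClassTwoExpP p α) :=
  QuotientGroup.Quotient.group _

/-- A free-group automorphism induced by a permutation of the generators maps
`γ_3(E) E^p` onto itself. -/
theorem freeRelSubgroup_map_freeGroupCongr (p : ℕ) (α : Type) (e : Equiv.Perm α) :
    (freeRelSubgroup p α).map (FreeGroup.freeGroupCongr e).toMonoidHom = freeRelSubgroup p α := by
  have key : ∀ f : Equiv.Perm α,
      (freeRelSubgroup p α).map (FreeGroup.freeGroupCongr f).toMonoidHom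
        ≤ freeRelSubgroup p α := by
    intro f
    rw [freeRelSubgroup, Subgroup.map_sup]
    apply sup_le
    · exact le_sup_of_le_left (Subgroup.lowerCentralSeries.map _ 2)
    · rw [freePowSubgroup, MonoidHom.map_closure]
      refine le_sup_of_le_right (Subgroup.closure_le _ |>.mpr ?_)
      rintro x ⟨y, ⟨g, rfl⟩, rfl⟩
      exact Subgroup.subset_closure ⟨FreeGroup.freeGroupCongr f g, by simp⟩
  refine le_antisymm (key e) ?_
  intro x hx
  have hsymm : (FreeGroup.freeGroupCongr e).symm x ∈ freeRelSubgroup p α := by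
    refine key e.symm ⟨x, hx, ?_⟩
    simp [FreeGroup.freeGroupCongr_symm]
  exact ⟨(FreeGroup.freeGroupCongr e).symm x, hsymm,
    (FreeGroup.freeGroupCongr e).apply_symm_apply x⟩

/-- The action of the permutations of the generators on the free class-2 exponent-`p`
group. -/
def permAut (p : ℕ) (α : Type) : Equiv.Perm α →* MulAut (FreeClassTwoExpP p α) where
  toFun e := QuotientGroup.congr (freeRelSubgroup p α) (freeRelSubgroup p α)
    (FreeGroup.freeGroupCongr e) (freeRelSubgroup_map_freeGroupCongr p α e)
  map_one' := by
    ext z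
    refine QuotientGroup.induction_on z fun g => ?_
    show (QuotientGroup.mk (FreeGroup.freeGroupCongr 1 g) : FreeClassTwoExpP p α) = QuotientGroup.mk g
    simp
  map_mul' e f := by
    ext z
    refine QuotientGroup.induction_on z fun g => ?_
    have h : FreeGroup.freeGroupCongr (e * f)
        = (FreeGroup.freeGroupCongr f).trans (FreeGroup.freeGroupCongr e) := by
      rw [FreeGroup.freeGroupCongr_trans]
      rfl
    simp only [h, MulAut.mul_apply]
    rfl

/-- Translation, as a homomorphism from `ℤ/m` to the permutations of `ℤ/m`. -/
def translationHom (m : ℕ) : Multiplicative (ZMod m) →* Equiv.Perm (ZMod m) where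
  toFun t := Equiv.addRight t.toAdd
  map_one' := by ext x; simp
  map_mul' t s := by ext x; simp [Equiv.Perm.mul_apply]; ring

/-- The action of `A = ℤ/p^k` on `M` induced by the cyclic shift `b_i ↦ b_{i+1}` of the
free generators (indices mod `p^k`). -/
def shiftAction' (p m : ℕ) : Multiplicative (ZMod m) →* MulAut (FreeClassTwoExpP p (ZMod m)) :=
  (permAut p (ZMod m)).comp (translationHom m)

/-- The finite `p`-group `G_k = A ⋉ M`. -/
def GkGroup (p k : ℕ) : Type :=
  FreeClassTwoExpP p (ZMod (p ^ k)) ⋊[shiftAction' p (p ^ k)] Multiplicative (ZMod (p ^ k))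

instance (p k : ℕ) : Group (GkGroup p k) := SemidirectProduct.instGroup

/-- The image in `G_k` of the generator `1` of `A = ℤ/p^k`. -/
def GkX (p k : ℕ) : GkGroup p k := SemidirectProduct.inr (Multiplicative.ofAdd (1 : ZMod (p ^ k)))

/-- The images in `G_k` of the generators `b_i` of `M`. -/
def GkB (p k : ℕ) (i : ZMod (p ^ k)) : GkGroup p k :=
  SemidirectProduct.inl (QuotientGroup.mk (FreeGroup.of i))

/-- The lower `p`-series of a group, indexed so that `lowerPSeriesGrp p G i` is the term
`P_{i+1}(G)`:  `P_1(G) = G` and `P_{i+1}(G) = P_i(G)^p [P_i(G), G]`. -/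
def lowerPSeriesGrp (p : ℕ) (G : Type*) [Group G] : ℕ → Subgroup G
  | 0 => ⊤
  | (i + 1) =>
      Subgroup.closure ((fun g => g ^ p) '' (lowerPSeriesGrp p G i : Set G)) ⊔
        ⁅lowerPSeriesGrp p G i, (⊤ : Subgroup G)⁆


/-!
The proof rests on two features of `G_k = A ⋉ M`: `M` is a normal subgroup of exponent `p`,
and `G_k = ⟨x⟩M`, so that `G_k/M` is cyclic and `γ_2 ≤ M`. The inclusion `⊇` holds in any
group, because `P_i` contains `γ_i` and all `p^{i-1}`-th powers. For `⊆` it suffices, by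
induction on `i`, that the `p`-th powers of elements of `Q_i = ⟨x^{p^{i-1}}⟩γ_i` lie in `Q_{i+1}`
and that `[Q_i, G_k] ≤ γ_{i+1}`. Both are computations modulo `γ_{i+1}`, where `γ_i` is
central: for `n ∈ γ_i ∩ M`, `(x^{p^{i-1} t} n)^p ≡ x^{p^i t} n^p = x^{p^i t}`; and
`[u^p, m] ≡ [u, m]^p = 1` whenever `[u, m] ∈ γ_i ∩ M`, which by induction gives
`[x^{p^{i-1}}, M] ≤ γ_{i+1}`, hence `[x^{p^{i-1}}, G_k] ≤ γ_{i+1}` since `x` commutes with its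
own powers.
-/

open scoped commutatorElement

namespace Subgroup

variable {G : Type*} [Group G]

theorem commutatorElement_mem_lowerCentralSeries_succ {d : ℕ} {m : G}
    (hm : m ∈ (⊤ : Subgroup G).lowerCentralSeries d) (g : G) :
    ⁅m, g⁆ ∈ (⊤ : Subgroup G).lowerCentralSeries (d + 1) :=
  lowerCentralSeries_isDescendingCentralSeries.2 m d hm g

theorem exists_commutatorElement_pow_left_eq_of_mem_lowerCentralSeries {u m : G} {d : ℕ}
    (hum : ⁅u, m⁆ ∈ (⊤ : Subgroup G).lowerCentralSeries d) (c : ℕ) :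
    ∃ z ∈ (⊤ : Subgroup G).lowerCentralSeries (d + 1), ⁅u ^ c, m⁆ = ⁅u, m⁆ ^ c * z := by
  induction c with
  | zero => exact ⟨1, one_mem _, by simp⟩
  | succ c ih =>
    obtain ⟨z, hz, hc⟩ := ih
    have hw := commutatorElement_mem_lowerCentralSeries_succ (inv_mem hum) (u ^ c)
    refine ⟨(⁅u, m⁆ ^ c)⁻¹ * ⁅⁅u, m⁆⁻¹, u ^ c⁆ * ⁅u, m⁆ ^ c * z,
      mul_mem (by simpa using Normal.conj_mem inferInstance _ hw (⁅u, m⁆ ^ c)⁻¹) hz, ?_⟩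
    rw [show z = (⁅u, m⁆ ^ c)⁻¹ * ⁅u ^ c, m⁆ by rw [hc]; group]
    simp only [commutatorElement_def]
    group

theorem exists_mul_pow_eq_of_mem_lowerCentralSeries {u n : G} {d : ℕ}
    (hn : n ∈ (⊤ : Subgroup G).lowerCentralSeries d) (c : ℕ) :
    ∃ z ∈ (⊤ : Subgroup G).lowerCentralSeries (d + 1), (u * n) ^ c = u ^ c * n ^ c * z := by
  induction c with
  | zero => exact ⟨1, one_mem _, by simp⟩
  | succ c ih =>
    obtain ⟨z, hz, hc⟩ := ih
    have hw := commutatorElement_mem_lowerCentralSeries_succ (inv_mem hn) (u ^ c)⁻¹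
    refine ⟨(n ^ c)⁻¹ * ⁅n⁻¹, (u ^ c)⁻¹⁆ * n ^ c * z,
      mul_mem (by simpa using Normal.conj_mem inferInstance _ hw (n ^ c)⁻¹) hz, ?_⟩
    rw [show z = (n ^ c)⁻¹ * ((u ^ c)⁻¹ * (u * n) ^ c) by rw [hc]; group]
    simp only [commutatorElement_def]
    group

end Subgroup

section LowerPSeries

variable {G : Type*} [Group G] (p : ℕ)

theorem lowerCentralSeries_le_lowerPSeriesGrp (j : ℕ) :
    (⊤ : Subgroup G).lowerCentralSeries j ≤ lowerPSeriesGrp p G j := by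
  induction j with
  | zero => exact le_rfl
  | succ j ih => exact le_sup_of_le_right (Subgroup.commutator_mono ih le_rfl)

theorem pow_pow_mem_lowerPSeriesGrp (g : G) (j : ℕ) : g ^ p ^ j ∈ lowerPSeriesGrp p G j := by
  induction j with
  | zero => exact Subgroup.mem_top _
  | succ j ih =>
    rw [pow_succ, pow_mul]
    exact Subgroup.mem_sup_left (Subgroup.subset_closure ⟨_, ih, rfl⟩)

variable {p}

theorem lowerPSeriesGrp_succ_le {j : ℕ} {H K : Subgroup G} (hj : lowerPSeriesGrp p G j ≤ H)
    (hpow : ∀ h ∈ H, h ^ p ∈ K) (hcomm : ⁅H, ⊤⁆ ≤ K) : lowerPSeriesGrp p G (j + 1) ≤ K := by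
  refine sup_le ((Subgroup.closure_le _).mpr ?_)
    ((Subgroup.commutator_mono hj le_rfl).trans hcomm)
  rintro _ ⟨h, hh, rfl⟩
  exact hpow h (hj hh)

end LowerPSeries

section ExponentPByCyclic

open Subgroup

variable {G : Type*} [Group G] {p : ℕ} {N : Subgroup G} [N.Normal] {x : G}

theorem exists_eq_zpow_mul_of_sup_eq_top (hx : zpowers x ⊔ N = ⊤) (g : G) :
    ∃ t : ℤ, ∃ n ∈ N, g = x ^ t * n := by
  have hg : g ∈ ((zpowers x ⊔ N : Subgroup G) : Set G) := by simp [hx]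
  rw [mul_normal] at hg
  obtain ⟨_, ⟨t, rfl⟩, n, hn, rfl⟩ := hg
  exact ⟨t, n, hn, rfl⟩

theorem lowerCentralSeries_one_le_of_sup_eq_top (hx : zpowers x ⊔ N = ⊤) :
    (⊤ : Subgroup G).lowerCentralSeries 1 ≤ N :=
  Normal.commutator_le_of_self_sup_commutative_eq_top (H := zpowers x) (by rwa [sup_comm] at hx)
    inferInstance

theorem commutatorElement_pow_pow_mem_lowerCentralSeries_of_mem (hN : ∀ n ∈ N, n ^ p = 1)
    (u : G) {n : G} (hn : n ∈ N) (s : ℕ) :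
    ⁅u ^ p ^ s, n⁆ ∈ (⊤ : Subgroup G).lowerCentralSeries (s + 1) := by
  induction s with
  | zero =>
    rw [pow_zero, pow_one]
    exact commutatorElement_mem_lowerCentralSeries_succ (mem_top u) n
  | succ s ih =>
    have hN' : ⁅u ^ p ^ s, n⁆ ∈ N := by
      rw [commutatorElement_def]
      exact mul_mem (Normal.conj_mem inferInstance n hn _) (inv_mem hn)
    obtain ⟨z, hz, hzz⟩ := exists_commutatorElement_pow_left_eq_of_mem_lowerCentralSeries ih p
    rw [pow_succ, pow_mul, hzz, hN _ hN', one_mul]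
    exact hz

theorem commutatorElement_pow_pow_mem_lowerCentralSeries (hN : ∀ n ∈ N, n ^ p = 1)
    (hx : zpowers x ⊔ N = ⊤) (s : ℕ) (g : G) :
    ⁅x ^ p ^ s, g⁆ ∈ (⊤ : Subgroup G).lowerCentralSeries (s + 1) := by
  obtain ⟨t, n, hn, rfl⟩ := exists_eq_zpow_mul_of_sup_eq_top hx g
  have hcomm : ⁅x ^ p ^ s, x ^ t⁆ = 1 :=
    ((Commute.refl x).pow_left _ |>.zpow_right t).commutator_eq
  rw [commutatorElement_mul_right_eq_mul_conj, hcomm, one_mul]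
  exact Normal.conj_mem inferInstance _
    (commutatorElement_pow_pow_mem_lowerCentralSeries_of_mem hN x hn s) _

theorem exists_eq_zpow_mul_of_mem_sup (hx : zpowers x ⊔ N = ⊤) {j : ℕ} {g : G}
    (hg : g ∈ closure {x ^ p ^ j} ⊔ (⊤ : Subgroup G).lowerCentralSeries j) :
    ∃ t : ℤ, ∃ n ∈ N, n ∈ (⊤ : Subgroup G).lowerCentralSeries j ∧ g = (x ^ p ^ j) ^ t * n := by
  cases j with
  | zero =>
    obtain ⟨t, n, hn, rfl⟩ := exists_eq_zpow_mul_of_sup_eq_top hx g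
    exact ⟨t, n, hn, mem_top n, by simp⟩
  | succ j =>
    rw [← SetLike.mem_coe, mul_normal] at hg
    obtain ⟨c, hc, n, hn, rfl⟩ := hg
    obtain ⟨t, rfl⟩ := mem_closure_singleton.mp hc
    have hn1 := Subgroup.lowerCentralSeries_antitone _ (Nat.le_add_left 1 j) hn
    exact ⟨t, n, lowerCentralSeries_one_le_of_sup_eq_top hx hn1, hn, rfl⟩

theorem pow_mem_closure_pow_pow_sup_lowerCentralSeries (hN : ∀ n ∈ N, n ^ p = 1)
    (hx : zpowers x ⊔ N = ⊤) {j : ℕ} {g : G}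
    (hg : g ∈ closure {x ^ p ^ j} ⊔ (⊤ : Subgroup G).lowerCentralSeries j) :
    g ^ p ∈ closure {x ^ p ^ (j + 1)} ⊔ (⊤ : Subgroup G).lowerCentralSeries (j + 1) := by
  obtain ⟨t, n, hnN, hn, rfl⟩ := exists_eq_zpow_mul_of_mem_sup hx hg
  obtain ⟨z, hz, hzz⟩ := exists_mul_pow_eq_of_mem_lowerCentralSeries (u := (x ^ p ^ j) ^ t) hn p
  have hpow : ((x ^ p ^ j) ^ t) ^ p = (x ^ p ^ (j + 1)) ^ t := by
    rw [← zpow_natCast, ← zpow_mul, mul_comm, zpow_mul, zpow_natCast, pow_succ, pow_mul]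
  rw [hzz, hN n hnN, mul_one, hpow]
  exact mul_mem (mem_sup_left (zpow_mem (mem_closure_singleton_self _) t)) (mem_sup_right hz)

theorem commutator_closure_pow_pow_sup_lowerCentralSeries_le (hN : ∀ n ∈ N, n ^ p = 1)
    (hx : zpowers x ⊔ N = ⊤) (j : ℕ) :
    ⁅closure {x ^ p ^ j} ⊔ (⊤ : Subgroup G).lowerCentralSeries j, ⊤⁆ ≤
      (⊤ : Subgroup G).lowerCentralSeries (j + 1) := by
  have hcentral : closure {x ^ p ^ j} ⊔ (⊤ : Subgroup G).lowerCentralSeries j ≤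
      Subgroup.upperCentralSeriesStep ((⊤ : Subgroup G).lowerCentralSeries (j + 1)) := by
    refine sup_le ?_ fun m hm => commutatorElement_mem_lowerCentralSeries_succ hm
    rw [closure_le, Set.singleton_subset_iff]
    exact commutatorElement_pow_pow_mem_lowerCentralSeries hN hx j
  exact commutator_le.mpr fun g hg h _ => hcentral hg h

theorem lowerPSeriesGrp_eq_closure_pow_pow_sup_lowerCentralSeries (hN : ∀ n ∈ N, n ^ p = 1)
    (hx : zpowers x ⊔ N = ⊤) (j : ℕ) :
    lowerPSeriesGrp p G j = closure {x ^ p ^ j} ⊔ (⊤ : Subgroup G).lowerCentralSeries j := by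
  refine le_antisymm ?_ (sup_le ?_ (lowerCentralSeries_le_lowerPSeriesGrp p j))
  · induction j with
    | zero => exact le_sup_right
    | succ j ih =>
      exact lowerPSeriesGrp_succ_le ih
        (fun _ => pow_mem_closure_pow_pow_sup_lowerCentralSeries hN hx)
        ((commutator_closure_pow_pow_sup_lowerCentralSeries_le hN hx j).trans le_sup_right)
  · exact (closure_le _).mpr (Set.singleton_subset_iff.mpr (pow_pow_mem_lowerPSeriesGrp p x j))

end ExponentPByCyclic

theorem FreeClassTwoExpP.pow_eq_one {p : ℕ} {α : Type} (g : FreeClassTwoExpP p α) : g ^ p = 1 := by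
  induction g using QuotientGroup.induction_on with
  | H w =>
    exact (QuotientGroup.eq_one_iff (w ^ p)).mpr
      (Subgroup.mem_sup_right (Subgroup.subset_closure ⟨w, rfl⟩))

theorem zpowers_ofAdd_one_eq_top (m : ℕ) :
    Subgroup.zpowers (Multiplicative.ofAdd (1 : ZMod m)) = ⊤ := by
  refine eq_top_iff.mpr fun a _ => ?_
  obtain ⟨t, ht⟩ := ZMod.intCast_surjective a.toAdd
  exact ⟨t, show _ ^ t = a by rw [← ofAdd_zsmul, zsmul_one, ht, ofAdd_toAdd]⟩

namespace SemidirectProduct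

variable {N G : Type*} [Group N] [Group G] {φ : G →* MulAut N}

theorem pow_eq_one_of_mem_ker_rightHom {p : ℕ} (hN : ∀ n : N, n ^ p = 1) :
    ∀ g ∈ (rightHom : N ⋊[φ] G →* G).ker, g ^ p = 1 := by
  intro g hg
  rw [← range_inl_eq_ker_rightHom] at hg
  obtain ⟨n, rfl⟩ := hg
  rw [← map_pow, hN, map_one]

theorem zpowers_inr_sup_ker_rightHom {a : G} (ha : Subgroup.zpowers a = ⊤) :
    Subgroup.zpowers (inr a : N ⋊[φ] G) ⊔ (rightHom : N ⋊[φ] G →* G).ker = ⊤ := by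
  refine eq_top_iff.mpr fun g _ => ?_
  obtain ⟨t, ht⟩ := Subgroup.mem_zpowers_iff.mp (ha ▸ Subgroup.mem_top g.right)
  rw [← inl_left_mul_inr_right g]
  exact mul_mem (Subgroup.mem_sup_right (MonoidHom.mem_ker.mpr (rightHom_inl _)))
    (Subgroup.mem_sup_left ⟨t, by rw [← ht, map_zpow]⟩)

end SemidirectProduct

theorem GkGroup_lowerPSeries_general (p k : ℕ) :
    ∀ i : ℕ, 1 ≤ i → i ≤ 2 * p ^ k - 1 →
      lowerPSeriesGrp p (GkGroup p k) (i - 1) =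
        Subgroup.closure {GkX p k ^ p ^ (i - 1)} ⊔
          (⊤ : Subgroup (GkGroup p k)).lowerCentralSeries (i - 1) := fun i _ _ =>
  lowerPSeriesGrp_eq_closure_pow_pow_sup_lowerCentralSeries
    (SemidirectProduct.pow_eq_one_of_mem_ker_rightHom FreeClassTwoExpP.pow_eq_one)
    (SemidirectProduct.zpowers_inr_sup_ker_rightHom (zpowers_ofAdd_one_eq_top _)) (i - 1)

/-- Proposition 3.6:  for `1 ≤ i ≤ 2p^k − 1`, the lower `p`-series of `G_k = A ⋉ M`
satisfies `P_i(G_k) = ⟨x^{p^{i−1}}⟩ γ_i(G_k)`, where `x` is the image in `G_k` of the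
generator `1` of `A = ℤ/p^k`.  Here `P_i(G_k) = lowerPSeriesGrp p (GkGroup p k) (i-1)` and
`γ_i(G_k) = lowerCentralSeries (GkGroup p k) (i-1)`. -/
theorem GkGroup_lowerPSeries (p k : ℕ) (hp : p.Prime) (hodd : Odd p) (hk : 1 ≤ k) :
    ∀ i : ℕ, 1 ≤ i → i ≤ 2 * p ^ k - 1 →
      lowerPSeriesGrp p (GkGroup p k) (i - 1) =
        Subgroup.closure {GkX p k ^ p ^ (i - 1)} ⊔
          (⊤ : Subgroup (GkGroup p k)).lowerCentralSeries (i - 1) :=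
  GkGroup_lowerPSeries_general p k
end

section
/- Let p be a prime, let G be a group, x ∈ G, and let z(i,j) ∈ G for i, j ≥ 1 be a family of elements such that any two elements z(i,j) and z(k,l) commute, z(i,j)^p = 1 for all i, j ≥ 1, and [z(i,j), x] = z(i+1,j) · z(i,j+1) · z(i+1,j+1) for all i, j ≥ 1. Then for all i, j ≥ 1 and all k ≥ 0: [z(i,j), x^{p^k}] = z(i + p^k, j) · z(i, j + p^k) · z(i + p^k, j + p^k). -/
/-!
The elements `z (a + 1) (b + 1)` generate an abelian group of exponent `p`, that is an
`𝔽_p`-vector space, and `X^a Y^b ↦ z (a + 1) (b + 1)` extends to an `𝔽_p`-linear map from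
`𝔽_p[X, Y]` to it. Since `x⁻¹ z x = z [z, x]`, the hypothesis says that conjugation by `x`
corresponds to multiplication by `(1 + X)(1 + Y)`. Hence conjugation by `x^(p^k)` corresponds to
multiplication by `((1 + X)(1 + Y))^(p^k) = (1 + X^(p^k))(1 + Y^(p^k))`, by the Frobenius.
-/

def cmt {G : Type*} [Group G] (u v : G) : G := u⁻¹ * v⁻¹ * u * v

open MvPolynomial Finsupp

namespace MvPolynomial

variable {σ R : Type*} [CommSemiring R]

theorem one_add_X_pow_mul_one_add_X_pow_mul_monomial (a b : σ) (s : ℕ) (m : σ →₀ ℕ) :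
    (1 + X a ^ s) * (1 + X b ^ s) * monomial m (1 : R) =
      monomial m 1 + monomial (m + single a s) 1 + monomial (m + single b s) 1
        + monomial (m + single a s + single b s) 1 := by
  simp only [monomial_add_single]
  ring

theorem one_add_X_mul_one_add_X_pow_expChar_pow (p : ℕ) [ExpChar R p] (a b : σ) (k : ℕ) :
    ((1 + X a) * (1 + X b) : MvPolynomial σ R) ^ p ^ k = (1 + X a ^ p ^ k) * (1 + X b ^ p ^ k) := by
  rw [mul_pow, add_pow_expChar_pow, add_pow_expChar_pow, one_pow]

variable {M : Type*} [AddCommMonoid M] [Module R M]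

@[simp]
theorem constr_basisMonomials_monomial_one (w : (σ →₀ ℕ) → M) (m : σ →₀ ℕ) :
    (basisMonomials σ R).constr R w (monomial m 1) = w m := by
  rw [← congrFun (coe_basisMonomials σ R) m, Module.Basis.constr_basis]

theorem constr_basisMonomials_one_add_X_pow_mul_one_add_X_pow_mul_monomial
    (w : (σ →₀ ℕ) → M) (a b : σ) (s : ℕ) (m : σ →₀ ℕ) :
    (basisMonomials σ R).constr R w ((1 + X a ^ s) * (1 + X b ^ s) * monomial m 1) =
      w m + w (m + single a s) + w (m + single b s) + w (m + single a s + single b s) := by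
  simp [one_add_X_pow_mul_one_add_X_pow_mul_monomial]

theorem pow_apply_constr_basisMonomials {T : Module.End R M} {w : (σ →₀ ℕ) → M}
    {P : MvPolynomial σ R}
    (hT : ∀ m, T (w m) = (basisMonomials σ R).constr R w (P * monomial m 1)) (n : ℕ)
    (q : MvPolynomial σ R) :
    (T ^ n) ((basisMonomials σ R).constr R w q) = (basisMonomials σ R).constr R w (P ^ n * q) := by
  have h : T ∘ₗ (basisMonomials σ R).constr R w =
      (basisMonomials σ R).constr R w ∘ₗ LinearMap.mulLeft R P :=
    (basisMonomials σ R).ext fun m => by simp [hT]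
  simpa [LinearMap.pow_mulLeft] using
    LinearMap.congr_fun (Module.End.commute_pow_left_of_commute h n) q

end MvPolynomial

theorem Module.End.pow_expChar_pow_apply_of_apply_eq {R M σ : Type*} [CommSemiring R]
    [AddCommMonoid M] [Module R M] (p : ℕ) [ExpChar R p] {T : Module.End R M}
    {w : (σ →₀ ℕ) → M} {a b : σ}
    (hT : ∀ m, T (w m) =
      w m + w (m + single a 1) + w (m + single b 1) + w (m + single a 1 + single b 1))
    (k : ℕ) (m : σ →₀ ℕ) :
    (T ^ p ^ k) (w m) = w m + w (m + single a (p ^ k)) + w (m + single b (p ^ k))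
      + w (m + single a (p ^ k) + single b (p ^ k)) := by
  have hT' : ∀ m, T (w m) =
      (basisMonomials σ R).constr R w ((1 + X a) * (1 + X b) * monomial m 1) := by
    intro m
    rw [← pow_one (X a), ← pow_one (X b),
      constr_basisMonomials_one_add_X_pow_mul_one_add_X_pow_mul_monomial, hT]
  simpa [one_add_X_mul_one_add_X_pow_expChar_pow,
    constr_basisMonomials_one_add_X_pow_mul_one_add_X_pow_mul_monomial] using
    pow_apply_constr_basisMonomials hT' (p ^ k) (monomial m 1)

theorem Monoid.End.pow_prime_pow_apply_of_apply_eq {A σ : Type*} [CommGroup A] {p : ℕ}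
    [Fact p.Prime] (hA : ∀ g : A, g ^ p = 1) {c : Monoid.End A} {w : (σ →₀ ℕ) → A} {a b : σ}
    (hc : ∀ m, c (w m) =
      w m * w (m + single a 1) * w (m + single b 1) * w (m + single a 1 + single b 1))
    (k : ℕ) (m : σ →₀ ℕ) :
    (c ^ p ^ k) (w m) = w m * w (m + single a (p ^ k)) * w (m + single b (p ^ k))
      * w (m + single a (p ^ k) + single b (p ^ k)) := by
  -- a `have` rather than a `let`: unfolding `zmodModule` would block coercing linear maps to functions
  have : Module (ZMod p) (Additive A) := AddCommGroup.zmodModule hA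
  let T : Module.End (ZMod p) (Additive A) := (MonoidHom.toAdditive c).toZModLinearMap p
  have hT : ∀ (n : ℕ) (g : Additive A), T^[n] g = Additive.ofMul (c^[n] g.toMul) := by
    intro n g
    induction n with
    | zero => rfl
    | succ n ih => rw [Function.iterate_succ_apply', ih, Function.iterate_succ_apply']; rfl
  simpa [Module.End.coe_pow, hT] using congrArg Additive.toMul <|
    Module.End.pow_expChar_pow_apply_of_apply_eq p (T := T) (w := fun m => .ofMul (w m))
      (fun m => congrArg Additive.ofMul (hc m)) k m

section Conjugation

variable {G : Type*} [Group G]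

theorem Subgroup.conj_mem_closure {S : Set G} {x : G} (hS : ∀ s ∈ S, x⁻¹ * s * x ∈ closure S)
    {g : G} (hg : g ∈ closure S) : x⁻¹ * g * x ∈ closure S := by
  have : closure S ≤ (closure S).comap (MulAut.conj x⁻¹).toMonoidHom :=
    closure_le _ |>.mpr fun s hs => by simpa using hS s hs
  simpa using this hg

open scoped IsMulCommutative in
theorem Subgroup.pow_eq_one_of_mem_closure {S : Set G} (hS : ∀ s ∈ S, ∀ t ∈ S, s * t = t * s)
    {n : ℕ} (hn : ∀ s ∈ S, s ^ n = 1) (g : closure S) : g ^ n = 1 := by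
  have := isMulCommutative_closure hS
  suffices ⊤ ≤ (powMonoidHom n : closure S →* closure S).ker from this trivial
  rw [← closure_closure_coe_preimage, closure_le]
  exact fun s hs => Subtype.ext (hn s hs)

open scoped IsMulCommutative in
theorem conj_pow_prime_pow_eq_of_conj_eq {σ : Type*} {p : ℕ} [Fact p.Prime] {x : G}
    {w : (σ →₀ ℕ) → G} {a b : σ} (hcomm : ∀ m n, Commute (w m) (w n))
    (horder : ∀ m, w m ^ p = 1)
    (hx : ∀ m, x⁻¹ * w m * x =
      w m * w (m + single a 1) * w (m + single b 1) * w (m + single a 1 + single b 1))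
    (k : ℕ) (m : σ →₀ ℕ) :
    (x ^ p ^ k)⁻¹ * w m * x ^ p ^ k = w m * w (m + single a (p ^ k)) * w (m + single b (p ^ k))
      * w (m + single a (p ^ k) + single b (p ^ k)) := by
  set A := Subgroup.closure (Set.range w)
  have hS : ∀ s ∈ Set.range w, ∀ t ∈ Set.range w, s * t = t * s := by
    rintro _ ⟨m, rfl⟩ _ ⟨n, rfl⟩
    exact hcomm m n
  have := Subgroup.isMulCommutative_closure hS
  have hw : ∀ m, w m ∈ A := fun m => Subgroup.subset_closure ⟨m, rfl⟩
  have hxA : ∀ g : A, x⁻¹ * g * x ∈ A := fun g => Subgroup.conj_mem_closure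
    (by rintro _ ⟨m, rfl⟩; rw [hx]; exact mul_mem (mul_mem (mul_mem (hw _) (hw _)) (hw _)) (hw _))
    g.2
  let c : Monoid.End A :=
    MonoidHom.mk' (fun g => ⟨x⁻¹ * g * x, hxA g⟩) fun g h => Subtype.ext (by simp [mul_assoc])
  have hc : ∀ n g, (c^[n] g : G) = (x ^ n)⁻¹ * g * x ^ n := by
    intro n g
    induction n with
    | zero => simp
    | succ n ih =>
      rw [Function.iterate_succ_apply', pow_succ]
      change x⁻¹ * _ * x = _
      rw [ih]
      group
  simpa [Monoid.End.coe_pow, hc] using congrArg Subtype.val <|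
    Monoid.End.pow_prime_pow_apply_of_apply_eq
      (Subgroup.pow_eq_one_of_mem_closure hS (Set.forall_mem_range.2 horder)) (c := c)
      (w := fun m => ⟨w m, hw m⟩) (fun m => Subtype.ext (hx m)) k m

theorem conj_eq_mul_cmt (u v : G) : v⁻¹ * u * v = u * cmt u v := by
  simp [cmt, mul_assoc]

end Conjugation

/-- Corollary 4.5:  if the elements `z i j` (for `i, j ≥ 1`) pairwise commute, have order
dividing the prime `p`, and satisfy `[z i j, x] = z (i+1) j · z i (j+1) · z (i+1) (j+1)`,
then `[z i j, x^{p^k}] = z (i+p^k) j · z i (j+p^k) · z (i+p^k) (j+p^k)`. -/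
theorem commutator_pow_prime_pow_formula (p : ℕ) (hp : p.Prime) {G : Type*} [Group G] (x : G)
    (z : ℕ → ℕ → G)
    (hcomm : ∀ i j k l, 1 ≤ i → 1 ≤ j → 1 ≤ k → 1 ≤ l → Commute (z i j) (z k l))
    (horder : ∀ i j, 1 ≤ i → 1 ≤ j → z i j ^ p = 1)
    (hrel : ∀ i j, 1 ≤ i → 1 ≤ j →
      cmt (z i j) x = z (i + 1) j * z i (j + 1) * z (i + 1) (j + 1)) :
    ∀ i j k, 1 ≤ i → 1 ≤ j →
      cmt (z i j) (x ^ p ^ k) =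
        z (i + p ^ k) j * z i (j + p ^ k) * z (i + p ^ k) (j + p ^ k) := by
  have := Fact.mk hp
  let w (m : Fin 2 →₀ ℕ) : G := z (m 0 + 1) (m 1 + 1)
  intro i j k hi hj
  obtain ⟨i, rfl⟩ := Nat.exists_eq_add_of_le' hi
  obtain ⟨j, rfl⟩ := Nat.exists_eq_add_of_le' hj
  have key := conj_pow_prime_pow_eq_of_conj_eq (x := x) (w := w) (a := 0) (b := 1)
    (fun m n => hcomm _ _ _ _ (by omega) (by omega) (by omega) (by omega))
    (fun m => horder _ _ (by omega) (by omega))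
    (fun m => by rw [conj_eq_mul_cmt, hrel _ _ (by omega) (by omega)]; simp [w, mul_assoc])
    k (single 0 i + single 1 j)
  rw [← mul_right_inj (z (i + 1) (j + 1)), ← conj_eq_mul_cmt]
  simpa [w, add_right_comm, mul_assoc] using key
end
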